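/- For every k ≥ 3 and every proper cyclic rotation α of A_k (i.e., α = A_k[i..|A_k|]·A_k[1..i-1] for some 2 ≤ i ≤ |A_k| with α ≠ A_k), the number of occurrences of α in A_k A_k A_k is exactly 2, in A_k B_k is exactly 1, and in B_k A_k is exactly 0, where A_k = S_{k-2} and B_k = Â_k. -/

import Mathlib

/-- The morphism φ: a ↦ ab, b ↦ aa, with `false = a`, `true = b`. -/
def pdPhi (c : Bool) : List Bool := if c then [false, false] else [false, true]

/-- The k-th period-doubling sequence. -/
def pd : ℕ → List Bool
  | 0 => [false]
  | k + 1 => (pd k).flatMap pdPhi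

/-- `hat w` : `w` with its last character flipped. -/
def hat (w : List Bool) : List Bool := w.dropLast ++ (w.getLast?.map Bool.not).toList

/-- `y` occurs in `w` at (0-based) position `i`. -/
def OccAt {α : Type*} (y w : List α) (i : ℕ) : Prop :=
  i + y.length ≤ w.length ∧ (w.drop i).take y.length = y

/-- The number of occurrences (starting positions) of `y` in `w`. -/
def occCount {α : Type*} [DecidableEq α] (y w : List α) : ℕ :=
  ((List.range (w.length + 1)).filter
    (fun i => decide (i + y.length ≤ w.length ∧ (w.drop i).take y.length = y))).length

/-! The length-`|A|` window at position `i` is `A.rotate i` in `AAA` (for `i ≤ 2|A|`); in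
`A ++ hat A` it is `A.rotate i` for `i < |A|` and `hat A` at `i = |A|`; in `hat A ++ A` it is
`(hat A).rotate i` for `i < |A|` and `A` at `i = |A|`. Since `A = pd n` is primitive,
`A.rotate i = A.rotate t` forces `i ≡ t [MOD |A|]`, and no rotation of `hat A` is a rotation of
`A`; this leaves the positions `t, t + |A|`, then `t`, then none. -/

open Function

section Hat

lemma hat_append_singleton (u : List Bool) (c : Bool) : hat (u ++ [c]) = u ++ [!c] := by
  simp [hat]

lemma length_hat (w : List Bool) : (hat w).length = w.length := by
  obtain rfl | ⟨u, c, rfl⟩ := w.eq_nil_or_concat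
  · rfl
  · simp [hat_append_singleton]

lemma hat_ne_self {w : List Bool} (hw : w ≠ []) : hat w ≠ w := by
  obtain ⟨u, c, rfl⟩ := w.eq_nil_or_concat.resolve_left hw
  simp [hat_append_singleton]

lemma take_hat {w : List Bool} {i : ℕ} (hi : i < w.length) : (hat w).take i = w.take i := by
  obtain rfl | ⟨u, c, rfl⟩ := w.eq_nil_or_concat
  · rfl
  · simp only [List.concat_eq_append, List.length_append, List.length_singleton] at hi
    simp only [List.concat_eq_append, hat_append_singleton,
      List.take_append_of_le_length (Nat.le_of_lt_succ hi)]

/-- `hat` changes the number of `true`s, which rotation preserves. -/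
lemma not_isRotated_hat {w : List Bool} (hw : w ≠ []) : ¬ w ~r hat w := by
  obtain ⟨u, c, rfl⟩ := w.eq_nil_or_concat.resolve_left hw
  intro h
  have := h.perm.count_eq true
  cases c <;> simp [hat_append_singleton] at this

lemma flatMap_pdPhi_hat {w : List Bool} (hw : w ≠ []) :
    (hat w).flatMap pdPhi = hat (w.flatMap pdPhi) := by
  obtain ⟨u, c, rfl⟩ := w.eq_nil_or_concat.resolve_left hw
  cases c <;> simp [pdPhi, hat]

end Hat

section PeriodDoubling

lemma pd_ne_nil (n : ℕ) : pd n ≠ [] := by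
  induction n with
  | zero => simp [pd]
  | succ n ih =>
    obtain ⟨c, l, h⟩ := List.exists_cons_of_ne_nil ih
    cases c <;> simp [pd, h, pdPhi]

lemma pd_succ (n : ℕ) : pd (n + 1) = pd n ++ hat (pd n) := by
  induction n with
  | zero => simp [pd, pdPhi, hat]
  | succ n ih =>
    calc pd (n + 2) = (pd n ++ hat (pd n)).flatMap pdPhi := by rw [← ih]; rfl
      _ = pd (n + 1) ++ hat (pd (n + 1)) := by
        rw [List.flatMap_append, flatMap_pdPhi_hat (pd_ne_nil n)]; rfl

lemma length_pd (n : ℕ) : (pd n).length = 2 ^ n := by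
  induction n with
  | zero => rfl
  | succ n ih => rw [pd_succ, List.length_append, length_hat, ih, pow_succ, mul_two]

end PeriodDoubling

section Rotate

variable {α : Type*}

lemma iterate_rotate_one (l : List α) (n : ℕ) :
    (fun l : List α => l.rotate 1)^[n] l = l.rotate n := by
  induction n with
  | zero => simp
  | succ n ih => rw [iterate_succ_apply', ih, List.rotate_rotate]

/-- `hl` says that `l` is a primitive word: its rotation orbit has `l.length` elements. -/
lemma rotate_eq_rotate_iff_mod {l : List α}
    (hl : minimalPeriod (fun l : List α => l.rotate 1) l = l.length) {i j : ℕ} :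
    l.rotate i = l.rotate j ↔ i % l.length = j % l.length := by
  have hpos : 0 < l.length := by
    rcases l with _ | ⟨_, _⟩
    · have : IsFixedPt (fun l : List α => l.rotate 1) [] := List.rotate_nil 1
      simp [minimalPeriod_eq_one_iff_isFixedPt.2 this] at hl
    · simp
  rw [← iterate_rotate_one, ← iterate_rotate_one, ← iterate_mod_minimalPeriod_eq,
    ← iterate_mod_minimalPeriod_eq (n := j), hl,
    iterate_eq_iterate_iff_of_lt_minimalPeriod] <;> rw [hl] <;> exact Nat.mod_lt _ hpos

end Rotate

/-- Rotating `pd (n + 1) = pd n ++ hat (pd n)` by a half gives `hat (pd n) ++ pd n`, so no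
proper divisor of `2 ^ (n + 1)` is a period. -/
lemma minimalPeriod_rotate_pd (n : ℕ) :
    minimalPeriod (fun l : List Bool => l.rotate 1) (pd n) = (pd n).length := by
  have hdvd : minimalPeriod (fun l : List Bool => l.rotate 1) (pd n) ∣ 2 ^ n := by
    rw [← isPeriodicPt_iff_minimalPeriod_dvd, IsPeriodicPt, IsFixedPt, iterate_rotate_one,
      ← length_pd, List.rotate_length]
  obtain ⟨j, hjn, hj⟩ := (Nat.dvd_prime_pow Nat.prime_two).1 hdvd
  rw [hj, length_pd]
  obtain rfl | hjn := hjn.eq_or_lt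
  · rfl
  obtain ⟨m, rfl⟩ : ∃ m, n = m + 1 := ⟨n - 1, by omega⟩
  have hhalf : (pd (m + 1)).rotate (pd m).length = pd (m + 1) := by
    rw [← iterate_rotate_one, length_pd]
    exact (isPeriodicPt_minimalPeriod _ _).trans_dvd (hj ▸ pow_dvd_pow 2 (by omega))
  rw [pd_succ, List.rotate_append_length_eq] at hhalf
  exact absurd (List.append_inj hhalf (length_hat _)).1 (hat_ne_self (pd_ne_nil m))

section Occurrences

variable {α : Type*}

lemma occCount_eq_card [DecidableEq α] {y w : List α} {S : Finset ℕ}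
    (hS : ∀ i, OccAt y w i ↔ i ∈ S) : occCount y w = S.card := by
  rw [occCount, ← List.toFinset_card_of_nodup (List.nodup_range.filter _)]
  congr 1
  ext i
  simp only [List.mem_toFinset, List.mem_filter, List.mem_range, decide_eq_true_eq, ← hS, OccAt]
  exact and_iff_right_of_imp fun h => by omega

lemma take_length_drop_append {u v : List α} {i : ℕ} (hi : i ≤ u.length) :
    ((u ++ v).drop i).take u.length = u.drop i ++ v.take i := by
  rw [List.drop_append_of_le_length hi, List.take_append, List.take_of_length_le (by simp),
    List.length_drop, Nat.sub_sub_self hi]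

lemma take_length_drop_append_append {l : List α} {i : ℕ} (hi : i ≤ 2 * l.length) :
    ((l ++ l ++ l).drop i).take l.length = l.rotate i := by
  rcases le_total i l.length with hil | hli
  · rw [List.append_assoc, take_length_drop_append hil, List.take_append_of_le_length hil,
      List.rotate_eq_drop_append_take hil]
  · obtain ⟨j, rfl⟩ := Nat.exists_eq_add_of_le hli
    rw [List.append_assoc, List.drop_append, List.drop_eq_nil_of_le (by omega), List.nil_append,
      Nat.add_sub_cancel_left, take_length_drop_append (by omega),
      ← List.rotate_eq_drop_append_take (by omega), ← List.rotate_rotate, List.rotate_length]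

lemma take_length_drop_append_hat {A : List Bool} {i : ℕ} (hi : i < A.length) :
    ((A ++ hat A).drop i).take A.length = A.rotate i := by
  rw [take_length_drop_append hi.le, take_hat hi, List.rotate_eq_drop_append_take hi.le]

lemma take_length_drop_hat_append {A : List Bool} {i : ℕ} (hi : i < A.length) :
    ((hat A ++ A).drop i).take A.length = (hat A).rotate i := by
  have hi' : i ≤ (hat A).length := (length_hat A).symm ▸ hi.le
  rw [← length_hat, take_length_drop_append hi', ← take_hat hi,
    List.rotate_eq_drop_append_take hi']

lemma rotate_hat_ne_rotate {A : List Bool} (hA : A ≠ []) (i t : ℕ) :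
    (hat A).rotate i ≠ A.rotate t := by
  intro h
  have hAt : A ~r A.rotate t := ⟨t, rfl⟩
  have hBt : hat A ~r A.rotate t := ⟨i, h⟩
  exact not_isRotated_hat hA (hAt.trans hBt.symm)

end Occurrences

lemma occCount_rotate_append_append {α : Type*} [DecidableEq α] {A : List α} {t : ℕ}
    (hA : minimalPeriod (fun l : List α => l.rotate 1) A = A.length)
    (ht0 : 0 < t) (ht : t < A.length) : occCount (A.rotate t) (A ++ A ++ A) = 2 := by
  rw [occCount_eq_card (S := {t, t + A.length}), Finset.card_pair (by omega)]
  intro i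
  simp only [OccAt, List.length_rotate, List.length_append, Finset.mem_insert,
    Finset.mem_singleton]
  constructor
  · rintro ⟨hi, h⟩
    rw [take_length_drop_append_append (by omega), rotate_eq_rotate_iff_mod hA,
      Nat.mod_eq_of_lt ht, Nat.mod_eq_iff] at h
    obtain ⟨-, rfl⟩ | ⟨-, q, rfl⟩ := h
    · omega
    · have : q < 2 := by nlinarith
      interval_cases q <;> omega
  · rintro (rfl | rfl)
    · exact ⟨by omega, take_length_drop_append_append (by omega)⟩
    · refine ⟨by omega, ?_⟩
      rw [take_length_drop_append_append (by omega), rotate_eq_rotate_iff_mod hA,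
        Nat.add_mod_right]

section PrimitiveWord

variable {A : List Bool} {t : ℕ}

lemma occCount_rotate_append_hat
    (hA : minimalPeriod (fun l : List Bool => l.rotate 1) A = A.length)
    (ht : t < A.length) : occCount (A.rotate t) (A ++ hat A) = 1 := by
  rw [occCount_eq_card (S := {t}), Finset.card_singleton]
  intro i
  simp only [OccAt, List.length_rotate, List.length_append, length_hat, Finset.mem_singleton]
  constructor
  · rintro ⟨hi, h⟩
    obtain hi | rfl := (show i ≤ A.length by omega).lt_or_eq
    · rwa [take_length_drop_append_hat hi, rotate_eq_rotate_iff_mod hA,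
        Nat.mod_eq_of_lt hi, Nat.mod_eq_of_lt ht] at h
    · rw [List.drop_left, List.take_of_length_le (length_hat A).le,
        ← List.rotate_zero (hat A)] at h
      exact absurd h (rotate_hat_ne_rotate (List.ne_nil_of_length_pos (by omega)) 0 t)
  · rintro rfl
    exact ⟨by omega, take_length_drop_append_hat ht⟩

lemma occCount_rotate_hat_append
    (hA : minimalPeriod (fun l : List Bool => l.rotate 1) A = A.length)
    (ht0 : 0 < t) (ht : t < A.length) : occCount (A.rotate t) (hat A ++ A) = 0 := by
  rw [occCount_eq_card (S := ∅), Finset.card_empty]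
  intro i
  simp only [OccAt, List.length_rotate, List.length_append, length_hat, Finset.notMem_empty,
    iff_false, not_and]
  intro hi h
  obtain hi | rfl := (show i ≤ A.length by omega).lt_or_eq
  · exact rotate_hat_ne_rotate (List.ne_nil_of_length_pos (by omega)) i t
      (take_length_drop_hat_append hi ▸ h)
  · rw [← length_hat, List.drop_left, length_hat, List.take_length] at h
    have h0t := (rotate_eq_rotate_iff_mod hA).1 ((List.rotate_zero A).trans h)
    rw [Nat.zero_mod, Nat.mod_eq_of_lt ht] at h0t
    omega

end PrimitiveWord

theorem pd_rotation_occurrences_general (k : ℕ) (t : ℕ)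
    (ht : t < (pd (k-2)).length)
    (hproper : (pd (k-2)).drop t ++ (pd (k-2)).take t ≠ pd (k-2)) :
    occCount ((pd (k-2)).drop t ++ (pd (k-2)).take t)
        (pd (k-2) ++ pd (k-2) ++ pd (k-2)) = 2 ∧
    occCount ((pd (k-2)).drop t ++ (pd (k-2)).take t)
        (pd (k-2) ++ hat (pd (k-2))) = 1 ∧
    occCount ((pd (k-2)).drop t ++ (pd (k-2)).take t)
        (hat (pd (k-2)) ++ pd (k-2)) = 0 := by
  rw [← List.rotate_eq_drop_append_take ht.le] at hproper ⊢
  have ht0 : 0 < t := Nat.pos_of_ne_zero fun h => hproper (h ▸ List.rotate_zero _)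
  have hA := minimalPeriod_rotate_pd (k - 2)
  exact ⟨occCount_rotate_append_append hA ht0 ht, occCount_rotate_append_hat hA ht,
    occCount_rotate_hat_append hA ht0 ht⟩

/-- For `k ≥ 3` and any proper cyclic rotation `α` of `A = S_{k-2}`, the number of
occurrences of `α` in `AAA`, `AB`, `BA` is `2`, `1`, `0` respectively, where `B = Â`. -/
theorem pd_rotation_occurrences (k : ℕ) (hk : 3 ≤ k) (t : ℕ)
    (ht : t < (pd (k-2)).length)
    (hproper : (pd (k-2)).drop t ++ (pd (k-2)).take t ≠ pd (k-2)) :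
    occCount ((pd (k-2)).drop t ++ (pd (k-2)).take t)
        (pd (k-2) ++ pd (k-2) ++ pd (k-2)) = 2 ∧
    occCount ((pd (k-2)).drop t ++ (pd (k-2)).take t)
        (pd (k-2) ++ hat (pd (k-2))) = 1 ∧
    occCount ((pd (k-2)).drop t ++ (pd (k-2)).take t)
        (hat (pd (k-2)) ++ pd (k-2)) = 0 :=
  pd_rotation_occurrences_general k t ht hproper
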